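/- Fix ε ∈ (0, 1], positive integers n, m, constants M > 0 and Q ≥ 0. Consider the smoothed BitLinear weight map Φ(W) := β_ε(W)·sgn_ε(P(W)) ∈ ℝ^{n×m}, where sgn_ε is applied entrywise and P is the zero-mean projection. Then for every x ∈ ℝ^m with Euclidean norm ‖x‖₂ ≤ Q and all real n-by-m matrices W, Ŵ with all entries bounded in absolute value by M: ‖Φ(W)·x − Φ(Ŵ)·x‖₂ ≤ Q·(1 + √(4M² + ε²)/ε)·‖W − Ŵ‖_F. -/

import Mathlib

open scoped BigOperators

/-- The all-ones `n × m` real matrix. -/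
noncomputable def allOnes (n m : ℕ) : Matrix (Fin n) (Fin m) ℝ :=
  Matrix.of fun _ _ => (1 : ℝ)

/-- The layer mean `α(W) = (1/(n·m)) ∑_{i,j} W_{ij}`. -/
noncomputable def layerMean {n m : ℕ} (W : Matrix (Fin n) (Fin m) ℝ) : ℝ :=
  (1 / ((n : ℝ) * m)) * ∑ i, ∑ j, W i j

/-- The zero-mean projection `P(W) = W − α(W)·J`. -/
noncomputable def zeroMeanProj {n m : ℕ} (W : Matrix (Fin n) (Fin m) ℝ) :
    Matrix (Fin n) (Fin m) ℝ :=
  W - layerMean W • allOnes n m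

/-- The Frobenius inner product `⟨A,B⟩ = ∑_{i,j} A_{ij} B_{ij}`. -/
noncomputable def frobInner {n m : ℕ} (A B : Matrix (Fin n) (Fin m) ℝ) : ℝ :=
  ∑ i, ∑ j, A i j * B i j

/-- The Frobenius norm `‖A‖_F = (∑_{i,j} A_{ij}²)^{1/2}`. -/
noncomputable def frobNorm {n m : ℕ} (A : Matrix (Fin n) (Fin m) ℝ) : ℝ :=
  Real.sqrt (∑ i, ∑ j, (A i j) ^ 2)

/-- The Euclidean norm `‖v‖₂ = (∑_i v_i²)^{1/2}`. -/
noncomputable def eucNorm {k : ℕ} (v : Fin k → ℝ) : ℝ :=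
  Real.sqrt (∑ i, (v i) ^ 2)

/-- The entrywise smooth sign `sgn_ε(A)_{ij} = tanh(A_{ij}/ε)`. -/
noncomputable def matrixSmoothSign {n m : ℕ} (ε : ℝ) (A : Matrix (Fin n) (Fin m) ℝ) :
    Matrix (Fin n) (Fin m) ℝ :=
  Matrix.of fun i j => Real.tanh (A i j / ε)

/-- The smooth L¹-scale `β_ε(W) = (1/(n·m)) ∑_{i,j} √(P(W)_{ij}² + ε²)`. -/
noncomputable def smoothScale {n m : ℕ} (ε : ℝ) (W : Matrix (Fin n) (Fin m) ℝ) : ℝ :=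
  (1 / ((n : ℝ) * m)) * ∑ i, ∑ j, Real.sqrt ((zeroMeanProj W i j) ^ 2 + ε ^ 2)

/-- The smoothed BitLinear weight map `Φ(W) = β_ε(W)·sgn_ε(P(W))`. -/
noncomputable def bitLinearWeight {n m : ℕ} (ε : ℝ) (W : Matrix (Fin n) (Fin m) ℝ) :
    Matrix (Fin n) (Fin m) ℝ :=
  smoothScale ε W • matrixSmoothSign ε (zeroMeanProj W)

open Finset

/- auxiliary lemmas -/

lemma my_hasDerivAt_tanh (x : ℝ) :
    HasDerivAt Real.tanh (1 / Real.cosh x ^ 2) x := by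
  have h : HasDerivAt (fun y => Real.sinh y / Real.cosh y)
      ((Real.cosh x * Real.cosh x - Real.sinh x * Real.sinh x) / Real.cosh x ^ 2) x :=
    (Real.hasDerivAt_sinh x).div (Real.hasDerivAt_cosh x) (ne_of_gt (Real.cosh_pos x))
  have heq : (Real.cosh x * Real.cosh x - Real.sinh x * Real.sinh x) / Real.cosh x ^ 2
      = 1 / Real.cosh x ^ 2 := by
    rw [show Real.cosh x * Real.cosh x - Real.sinh x * Real.sinh x
        = Real.cosh x ^ 2 - Real.sinh x ^ 2 by ring, Real.cosh_sq_sub_sinh_sq]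
  rw [heq] at h
  have : (fun y => Real.sinh y / Real.cosh y) = Real.tanh := by
    funext y; rw [Real.tanh_eq_sinh_div_cosh]
  rwa [this] at h

lemma my_tanh_lipschitz (a b : ℝ) : |Real.tanh a - Real.tanh b| ≤ |a - b| := by
  have := Convex.norm_image_sub_le_of_norm_hasDerivWithin_le
    (f := Real.tanh) (f' := fun y => 1 / Real.cosh y ^ 2) (C := 1) (s := Set.univ)
    (fun y _ => (my_hasDerivAt_tanh y).hasDerivWithinAt)
    (fun y _ => by
      rw [Real.norm_eq_abs, abs_of_nonneg (by positivity)]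
      rw [div_le_one (by positivity)]
      nlinarith [Real.one_le_cosh y])
    convex_univ (Set.mem_univ b) (Set.mem_univ a)
  simpa [Real.norm_eq_abs] using this

lemma my_abs_tanh_le_one (x : ℝ) : |Real.tanh x| ≤ 1 := by
  rw [Real.tanh_eq_sinh_div_cosh, abs_div, abs_of_pos (Real.cosh_pos x),
    div_le_one (Real.cosh_pos x), ← Real.cosh_abs]
  have := Real.sinh_lt_cosh (x := |x|)
  have h2 : Real.sinh |x| = |Real.sinh x| := (Real.abs_sinh x).symm
  linarith [le_of_eq h2.symm]

lemma my_sqrt_sq_add_lipschitz (ε a b : ℝ) :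
    |Real.sqrt (a ^ 2 + ε ^ 2) - Real.sqrt (b ^ 2 + ε ^ 2)| ≤ |a - b| := by
  have key : ∀ u v : ℝ, Real.sqrt (u ^ 2 + ε ^ 2) ≤ Real.sqrt (v ^ 2 + ε ^ 2) + |u - v| := by
    intro u v
    have hs : |v| ≤ Real.sqrt (v ^ 2 + ε ^ 2) := by
      rw [← Real.sqrt_sq_eq_abs]
      exact Real.sqrt_le_sqrt (by nlinarith [sq_nonneg ε])
    have hb : v * (u - v) ≤ Real.sqrt (v ^ 2 + ε ^ 2) * |u - v| := by
      calc v * (u - v) ≤ |v * (u - v)| := le_abs_self _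
        _ = |v| * |u - v| := abs_mul _ _
        _ ≤ _ := mul_le_mul_of_nonneg_right hs (abs_nonneg _)
    have hsq : Real.sqrt (v ^ 2 + ε ^ 2) ^ 2 = v ^ 2 + ε ^ 2 :=
      Real.sq_sqrt (by positivity)
    have h2 : u ^ 2 + ε ^ 2 ≤ (Real.sqrt (v ^ 2 + ε ^ 2) + |u - v|) ^ 2 := by
      nlinarith [sq_abs (u - v)]
    calc Real.sqrt (u ^ 2 + ε ^ 2) ≤ Real.sqrt ((Real.sqrt (v ^ 2 + ε ^ 2) + |u - v|) ^ 2) :=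
          Real.sqrt_le_sqrt h2
      _ = _ := Real.sqrt_sq (by positivity)
  rw [abs_sub_le_iff]
  constructor
  · linarith [key a b]
  · rw [abs_sub_comm] ; linarith [key b a]

lemma zeroMeanProj_apply {n m : ℕ} (W : Matrix (Fin n) (Fin m) ℝ) (i : Fin n) (j : Fin m) :
    zeroMeanProj W i j = W i j - layerMean W := by
  simp [zeroMeanProj, allOnes, Matrix.sub_apply]

lemma frobNorm_nonneg {n m : ℕ} (A : Matrix (Fin n) (Fin m) ℝ) : 0 ≤ frobNorm A :=
  Real.sqrt_nonneg _

lemma frobNorm_smul {n m : ℕ} (c : ℝ) (A : Matrix (Fin n) (Fin m) ℝ) :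
    frobNorm (c • A) = |c| * frobNorm A := by
  unfold frobNorm
  have : ∀ i j, ((c • A) i j) ^ 2 = c ^ 2 * (A i j) ^ 2 := by
    intro i j; simp [Matrix.smul_apply, smul_eq_mul]; ring
  simp_rw [this, ← Finset.mul_sum]
  rw [Real.sqrt_mul (sq_nonneg c), Real.sqrt_sq_eq_abs]

lemma frobNorm_mono {n m : ℕ} (A B : Matrix (Fin n) (Fin m) ℝ)
    (h : ∀ i j, (A i j) ^ 2 ≤ (B i j) ^ 2) : frobNorm A ≤ frobNorm B := by
  apply Real.sqrt_le_sqrt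
  exact Finset.sum_le_sum fun i _ => Finset.sum_le_sum fun j _ => h i j

lemma frobNorm_add_le {n m : ℕ} (A B : Matrix (Fin n) (Fin m) ℝ) :
    frobNorm (A + B) ≤ frobNorm A + frobNorm B := by
  unfold frobNorm
  have e : ∀ (C : Matrix (Fin n) (Fin m) ℝ), ∑ i, ∑ j, (C i j) ^ 2
      = ∑ p : Fin n × Fin m, (C p.1 p.2) ^ 2 := fun C =>
    (Fintype.sum_prod_type (fun p : Fin n × Fin m => (C p.1 p.2) ^ 2)).symm
  rw [e (A + B), e A, e B]
  set SA := ∑ p : Fin n × Fin m, (A p.1 p.2) ^ 2 with hSA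
  set SB := ∑ p : Fin n × Fin m, (B p.1 p.2) ^ 2 with hSB
  have hcs : ∑ p : Fin n × Fin m, A p.1 p.2 * B p.1 p.2 ≤ Real.sqrt SA * Real.sqrt SB :=
    Real.sum_mul_le_sqrt_mul_sqrt _ _ _
  have hA : 0 ≤ SA := Finset.sum_nonneg fun _ _ => sq_nonneg _
  have hB : 0 ≤ SB := Finset.sum_nonneg fun _ _ => sq_nonneg _
  have hexp : ∑ p : Fin n × Fin m, ((A + B) p.1 p.2) ^ 2
      = SA + 2 * (∑ p : Fin n × Fin m, A p.1 p.2 * B p.1 p.2) + SB := by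
    rw [hSA, hSB, Finset.mul_sum, ← Finset.sum_add_distrib, ← Finset.sum_add_distrib]
    apply Finset.sum_congr rfl
    intro p _
    simp [Matrix.add_apply]
    ring
  have h2 : ∑ p : Fin n × Fin m, ((A + B) p.1 p.2) ^ 2
      ≤ (Real.sqrt SA + Real.sqrt SB) ^ 2 := by
    rw [hexp]
    have h3 : Real.sqrt SA ^ 2 = SA := Real.sq_sqrt hA
    have h4 : Real.sqrt SB ^ 2 = SB := Real.sq_sqrt hB
    nlinarith
  calc Real.sqrt (∑ p : Fin n × Fin m, ((A + B) p.1 p.2) ^ 2)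
      ≤ Real.sqrt ((Real.sqrt SA + Real.sqrt SB) ^ 2) := Real.sqrt_le_sqrt h2
    _ = _ := Real.sqrt_sq (by positivity)

lemma eucNorm_mulVec_le {n m : ℕ} (A : Matrix (Fin n) (Fin m) ℝ) (x : Fin m → ℝ) :
    eucNorm (A.mulVec x) ≤ frobNorm A * eucNorm x := by
  unfold eucNorm frobNorm
  have h1 : ∀ i, (A.mulVec x i) ^ 2 ≤ (∑ j, (A i j) ^ 2) * (∑ j, (x j) ^ 2) := by
    intro i
    have : A.mulVec x i = ∑ j, A i j * x j := by
      simp [Matrix.mulVec, dotProduct]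
    rw [this]
    exact Finset.sum_mul_sq_le_sq_mul_sq _ _ _
  have h2 : ∑ i, (A.mulVec x i) ^ 2 ≤ (∑ i, ∑ j, (A i j) ^ 2) * (∑ j, (x j) ^ 2) := by
    rw [Finset.sum_mul]
    exact Finset.sum_le_sum fun i _ => h1 i
  calc Real.sqrt (∑ i, (A.mulVec x i) ^ 2)
      ≤ Real.sqrt ((∑ i, ∑ j, (A i j) ^ 2) * (∑ j, (x j) ^ 2)) := Real.sqrt_le_sqrt h2
    _ = _ := Real.sqrt_mul (Finset.sum_nonneg fun _ _ =>
        Finset.sum_nonneg fun _ _ => sq_nonneg _) _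

lemma frobNorm_zeroMeanProj_le {n m : ℕ} (hn : 0 < n) (hm : 0 < m)
    (A : Matrix (Fin n) (Fin m) ℝ) : frobNorm (zeroMeanProj A) ≤ frobNorm A := by
  unfold frobNorm
  apply Real.sqrt_le_sqrt
  set α := layerMean A with hα
  set s := ∑ i, ∑ j, A i j with hs
  have hnm : ((n : ℝ) * m) ≠ 0 := by positivity
  have hαs : α * ((n : ℝ) * m) = s := by
    rw [hα, layerMean]; field_simp; exact hs.symm
  have hexp : ∑ i, ∑ j, (zeroMeanProj A i j) ^ 2
      = (∑ i, ∑ j, (A i j) ^ 2) - 2 * α * s + ((n : ℝ) * m) * α ^ 2 := by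
    simp_rw [zeroMeanProj_apply, sub_sq]
    rw [← hα]
    simp [Finset.sum_add_distrib, Finset.sum_sub_distrib, ← Finset.sum_mul,
      Finset.sum_const, Finset.card_univ, ← hs]
    have h2 : ∑ i : Fin n, ∑ j : Fin m, 2 * A i j = 2 * s := by
      rw [hs, Finset.mul_sum]
      exact Finset.sum_congr rfl fun i _ => by rw [Finset.mul_sum]
    rw [h2]
    ring
  rw [hexp]
  have hnm' : (0:ℝ) < (n:ℝ) * m := by positivity
  nlinarith [sq_nonneg s, sq_nonneg α, mul_nonneg hnm'.le (sq_nonneg α)]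

lemma layerMean_sub {n m : ℕ} (A B : Matrix (Fin n) (Fin m) ℝ) :
    layerMean (A - B) = layerMean A - layerMean B := by
  unfold layerMean
  simp [Matrix.sub_apply, Finset.sum_sub_distrib]
  ring

lemma zeroMeanProj_sub {n m : ℕ} (A B : Matrix (Fin n) (Fin m) ℝ) :
    zeroMeanProj A - zeroMeanProj B = zeroMeanProj (A - B) := by
  ext i j
  simp only [Matrix.sub_apply, zeroMeanProj_apply, layerMean_sub]
  ring

lemma smoothScale_nonneg {n m : ℕ} (ε : ℝ) (W : Matrix (Fin n) (Fin m) ℝ) :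
    0 ≤ smoothScale ε W := by
  unfold smoothScale
  apply mul_nonneg (by positivity)
  exact Finset.sum_nonneg fun i _ => Finset.sum_nonneg fun j _ => Real.sqrt_nonneg _

lemma abs_layerMean_le {n m : ℕ} (hn : 0 < n) (hm : 0 < m) (M : ℝ)
    (W : Matrix (Fin n) (Fin m) ℝ) (hW : ∀ i j, |W i j| ≤ M) : |layerMean W| ≤ M := by
  unfold layerMean
  have hnm : (0:ℝ) < (n:ℝ) * m := by
    have h1 : (0:ℝ) < (n:ℝ) := by exact_mod_cast hn
    have h2 : (0:ℝ) < (m:ℝ) := by exact_mod_cast hm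
    positivity
  rw [abs_mul, abs_of_pos (by positivity : (0:ℝ) < 1 / ((n:ℝ)*m))]
  have h1 : |∑ i, ∑ j, W i j| ≤ (n:ℝ) * m * M := by
    calc |∑ i, ∑ j, W i j| ≤ ∑ i, |∑ j, W i j| := Finset.abs_sum_le_sum_abs _ _
      _ ≤ ∑ i : Fin n, ∑ j, |W i j| :=
          Finset.sum_le_sum fun i _ => Finset.abs_sum_le_sum_abs _ _
      _ ≤ ∑ _i : Fin n, ∑ _j : Fin m, M :=
          Finset.sum_le_sum fun i _ => Finset.sum_le_sum fun j _ => hW i j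
      _ = (n:ℝ) * m * M := by
          simp [Finset.sum_const, Finset.card_univ]; ring
  calc 1 / ((n:ℝ)*m) * |∑ i, ∑ j, W i j| ≤ 1 / ((n:ℝ)*m) * ((n:ℝ) * m * M) :=
        mul_le_mul_of_nonneg_left h1 (by positivity)
    _ = M := by field_simp

lemma smoothScale_le {n m : ℕ} (hn : 0 < n) (hm : 0 < m) (ε M : ℝ)
    (W : Matrix (Fin n) (Fin m) ℝ) (hW : ∀ i j, |W i j| ≤ M) :
    smoothScale ε W ≤ Real.sqrt (4 * M ^ 2 + ε ^ 2) := by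
  unfold smoothScale
  have hnm : (0:ℝ) < (n:ℝ) * m := by
    have h1 : (0:ℝ) < (n:ℝ) := by exact_mod_cast hn
    have h2 : (0:ℝ) < (m:ℝ) := by exact_mod_cast hm
    positivity
  have hα : |layerMean W| ≤ M := abs_layerMean_le hn hm M W hW
  have hterm : ∀ i j, Real.sqrt ((zeroMeanProj W i j) ^ 2 + ε ^ 2)
      ≤ Real.sqrt (4 * M ^ 2 + ε ^ 2) := by
    intro i j
    apply Real.sqrt_le_sqrt
    have habs : |zeroMeanProj W i j| ≤ 2 * M := by
      rw [zeroMeanProj_apply]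
      calc |W i j - layerMean W| ≤ |W i j| + |layerMean W| := abs_sub _ _
        _ ≤ 2 * M := by linarith [hW i j]
    nlinarith [sq_abs (zeroMeanProj W i j), abs_nonneg (zeroMeanProj W i j)]
  calc 1 / ((n:ℝ)*m) * ∑ i, ∑ j, Real.sqrt ((zeroMeanProj W i j) ^ 2 + ε ^ 2)
      ≤ 1 / ((n:ℝ)*m) * ∑ _i : Fin n, ∑ _j : Fin m, Real.sqrt (4 * M ^ 2 + ε ^ 2) := by
        apply mul_le_mul_of_nonneg_left _ (by positivity)
        exact Finset.sum_le_sum fun i _ => Finset.sum_le_sum fun j _ => hterm i j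
    _ = Real.sqrt (4 * M ^ 2 + ε ^ 2) := by
        simp [Finset.sum_const, Finset.card_univ]
        field_simp

lemma abs_smoothScale_sub_le {n m : ℕ} (hn : 0 < n) (hm : 0 < m) (ε : ℝ)
    (W W' : Matrix (Fin n) (Fin m) ℝ) :
    |smoothScale ε W - smoothScale ε W'| * Real.sqrt ((n:ℝ) * m) ≤ frobNorm (W - W') := by
  have hnm : (0:ℝ) < (n:ℝ) * m := by
    have h1 : (0:ℝ) < (n:ℝ) := by exact_mod_cast hn
    have h2 : (0:ℝ) < (m:ℝ) := by exact_mod_cast hm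
    positivity
  set P := zeroMeanProj W
  set P' := zeroMeanProj W'
  set D := zeroMeanProj (W - W') with hD
  have hPP' : ∀ i j, P i j - P' i j = D i j := by
    intro i j
    rw [hD, ← zeroMeanProj_sub]
    simp [Matrix.sub_apply]
    rfl
  -- step 1: |Δβ| ≤ (1/(nm)) ∑∑ |D i j|
  have h1 : |smoothScale ε W - smoothScale ε W'|
      ≤ 1 / ((n:ℝ)*m) * ∑ i, ∑ j, |D i j| := by
    unfold smoothScale
    rw [← mul_sub, abs_mul, abs_of_pos (by positivity : (0:ℝ) < 1 / ((n:ℝ)*m))]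
    apply mul_le_mul_of_nonneg_left _ (by positivity)
    rw [← Finset.sum_sub_distrib]
    calc |∑ i, (∑ j, Real.sqrt (P i j ^ 2 + ε ^ 2) - ∑ j, Real.sqrt (P' i j ^ 2 + ε ^ 2))|
        ≤ ∑ i, |∑ j, Real.sqrt (P i j ^ 2 + ε ^ 2) - ∑ j, Real.sqrt (P' i j ^ 2 + ε ^ 2)| :=
          Finset.abs_sum_le_sum_abs _ _
      _ ≤ ∑ i, ∑ j, |D i j| := by
          apply Finset.sum_le_sum
          intro i _
          rw [← Finset.sum_sub_distrib]
          calc |∑ j, (Real.sqrt (P i j ^ 2 + ε ^ 2) - Real.sqrt (P' i j ^ 2 + ε ^ 2))|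
              ≤ ∑ j, |Real.sqrt (P i j ^ 2 + ε ^ 2) - Real.sqrt (P' i j ^ 2 + ε ^ 2)| :=
                Finset.abs_sum_le_sum_abs _ _
            _ ≤ ∑ j, |D i j| := by
                apply Finset.sum_le_sum
                intro j _
                have := my_sqrt_sq_add_lipschitz ε (P i j) (P' i j)
                rwa [hPP' i j] at this
  -- step 2: ∑∑ |D| ≤ √(nm) * frobNorm D
  have h2 : ∑ i, ∑ j, |D i j| ≤ Real.sqrt ((n:ℝ)*m) * frobNorm D := by
    have e1 : ∑ i, ∑ j, |D i j| = ∑ p : Fin n × Fin m, (1 : ℝ) * |D p.1 p.2| := by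
      rw [Fintype.sum_prod_type (f := fun p : Fin n × Fin m => (1:ℝ) * |D p.1 p.2|)]
      simp
    have e2 : frobNorm D = Real.sqrt (∑ p : Fin n × Fin m, |D p.1 p.2| ^ 2) := by
      unfold frobNorm
      rw [Fintype.sum_prod_type (f := fun p : Fin n × Fin m => |D p.1 p.2| ^ 2)]
      simp [sq_abs]
    have e3 : Real.sqrt (∑ _p : Fin n × Fin m, (1:ℝ) ^ 2) = Real.sqrt ((n:ℝ)*m) := by
      congr 1
      simp [Finset.card_univ]
    rw [e1, e2, ← e3]
    exact Real.sum_mul_le_sqrt_mul_sqrt _ _ _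
  have h3 : frobNorm D ≤ frobNorm (W - W') := frobNorm_zeroMeanProj_le hn hm _
  have hs : Real.sqrt ((n:ℝ)*m) ^ 2 = (n:ℝ)*m := Real.sq_sqrt hnm.le
  have hspos : 0 < Real.sqrt ((n:ℝ)*m) := Real.sqrt_pos.mpr hnm
  calc |smoothScale ε W - smoothScale ε W'| * Real.sqrt ((n:ℝ)*m)
      ≤ (1 / ((n:ℝ)*m) * (Real.sqrt ((n:ℝ)*m) * frobNorm D)) * Real.sqrt ((n:ℝ)*m) := by
        apply mul_le_mul_of_nonneg_right _ hspos.le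
        exact h1.trans (mul_le_mul_of_nonneg_left h2 (by positivity))
    _ = frobNorm D := by
        have e : (1 / ((n:ℝ)*m) * (Real.sqrt ((n:ℝ)*m) * frobNorm D)) * Real.sqrt ((n:ℝ)*m)
            = frobNorm D * (Real.sqrt ((n:ℝ)*m) ^ 2) / ((n:ℝ)*m) := by ring
        rw [e, hs]
        field_simp
    _ ≤ frobNorm (W - W') := h3

lemma frobNorm_smoothSign_le {n m : ℕ} (ε : ℝ) (A : Matrix (Fin n) (Fin m) ℝ) :
    frobNorm (matrixSmoothSign ε A) ≤ Real.sqrt ((n:ℝ)*m) := by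
  unfold frobNorm
  have h : ∀ i j, (matrixSmoothSign ε A i j) ^ 2 ≤ 1 := by
    intro i j
    have := my_abs_tanh_le_one (A i j / ε)
    have h2 : matrixSmoothSign ε A i j = Real.tanh (A i j / ε) := rfl
    rw [h2, ← sq_abs]
    nlinarith [abs_nonneg (Real.tanh (A i j / ε))]
  calc Real.sqrt (∑ i, ∑ j, (matrixSmoothSign ε A i j) ^ 2)
      ≤ Real.sqrt (∑ _i : Fin n, ∑ _j : Fin m, (1:ℝ)) := by
        apply Real.sqrt_le_sqrt
        exact Finset.sum_le_sum fun i _ => Finset.sum_le_sum fun j _ => h i j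
    _ = Real.sqrt ((n:ℝ)*m) := by
        congr 1
        simp [Finset.sum_const, Finset.card_univ]

theorem bitLinearWeight_lipschitz {n m : ℕ} (hn : 0 < n) (hm : 0 < m)
    (ε : ℝ) (hε0 : 0 < ε) (hε1 : ε ≤ 1) (M Q : ℝ) (hM : 0 < M) (hQ : 0 ≤ Q)
    (x : Fin m → ℝ) (hx : eucNorm x ≤ Q)
    (W W' : Matrix (Fin n) (Fin m) ℝ)
    (hW : ∀ i j, |W i j| ≤ M) (hW' : ∀ i j, |W' i j| ≤ M) :
    eucNorm (Matrix.mulVec (bitLinearWeight ε W) x - Matrix.mulVec (bitLinearWeight ε W') x)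
      ≤ Q * (1 + Real.sqrt (4 * M ^ 2 + ε ^ 2) / ε) * frobNorm (W - W') := by
  set b := smoothScale ε W with hb
  set b' := smoothScale ε W' with hb'
  set S := matrixSmoothSign ε (zeroMeanProj W) with hS
  set S' := matrixSmoothSign ε (zeroMeanProj W') with hS'
  set R := Real.sqrt (4 * M ^ 2 + ε ^ 2) with hR
  have hRnn : 0 ≤ R := Real.sqrt_nonneg _
  have hFnn : 0 ≤ frobNorm (W - W') := frobNorm_nonneg _
  -- decomposition
  have hdec : bitLinearWeight ε W - bitLinearWeight ε W' = (b - b') • S + b' • (S - S') := by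
    unfold bitLinearWeight
    rw [sub_smul, smul_sub, ← hb, ← hb', ← hS, ← hS']
    abel
  -- bound on term 1
  have ht1 : |b - b'| * frobNorm S ≤ frobNorm (W - W') := by
    calc |b - b'| * frobNorm S ≤ |b - b'| * Real.sqrt ((n:ℝ)*m) :=
          mul_le_mul_of_nonneg_left (frobNorm_smoothSign_le ε _) (abs_nonneg _)
      _ ≤ frobNorm (W - W') := abs_smoothScale_sub_le hn hm ε W W'
  -- bound on term 2
  have hSS' : frobNorm (S - S') ≤ (1 / ε) * frobNorm (W - W') := by
    have hmono : frobNorm (S - S') ≤ frobNorm (ε⁻¹ • zeroMeanProj (W - W')) := by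
      apply frobNorm_mono
      intro i j
      have e1 : (S - S') i j = Real.tanh (zeroMeanProj W i j / ε)
          - Real.tanh (zeroMeanProj W' i j / ε) := by
        simp [hS, hS', Matrix.sub_apply, matrixSmoothSign]
      have e2 : (ε⁻¹ • zeroMeanProj (W - W')) i j = ε⁻¹ * (zeroMeanProj (W - W') i j) := by
        simp [Matrix.smul_apply, smul_eq_mul]
      have hlip : |(S - S') i j| ≤ |(ε⁻¹ • zeroMeanProj (W - W')) i j| := by
        rw [e1, e2]
        calc |Real.tanh (zeroMeanProj W i j / ε) - Real.tanh (zeroMeanProj W' i j / ε)|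
            ≤ |zeroMeanProj W i j / ε - zeroMeanProj W' i j / ε| := my_tanh_lipschitz _ _
          _ = |ε⁻¹ * (zeroMeanProj (W - W') i j)| := by
              rw [← zeroMeanProj_sub]
              congr 1
              simp [Matrix.sub_apply]
              field_simp
      calc ((S - S') i j) ^ 2 = |(S - S') i j| ^ 2 := (sq_abs _).symm
        _ ≤ |(ε⁻¹ • zeroMeanProj (W - W')) i j| ^ 2 :=
            pow_le_pow_left₀ (abs_nonneg _) hlip 2
        _ = ((ε⁻¹ • zeroMeanProj (W - W')) i j) ^ 2 := sq_abs _
    calc frobNorm (S - S') ≤ frobNorm (ε⁻¹ • zeroMeanProj (W - W')) := hmono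
      _ = |ε⁻¹| * frobNorm (zeroMeanProj (W - W')) := frobNorm_smul _ _
      _ ≤ (1 / ε) * frobNorm (W - W') := by
          rw [abs_of_pos (by positivity : (0:ℝ) < ε⁻¹), one_div]
          exact mul_le_mul_of_nonneg_left (frobNorm_zeroMeanProj_le hn hm _) (by positivity)
  have ht2 : |b'| * frobNorm (S - S') ≤ R * ((1 / ε) * frobNorm (W - W')) := by
    have hb'R : |b'| ≤ R := by
      rw [abs_of_nonneg (smoothScale_nonneg ε W')]
      exact smoothScale_le hn hm ε M W' hW'
    exact mul_le_mul hb'R hSS' (frobNorm_nonneg _) hRnn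
  -- total Frobenius bound
  have hfrob : frobNorm (bitLinearWeight ε W - bitLinearWeight ε W')
      ≤ (1 + R / ε) * frobNorm (W - W') := by
    calc frobNorm (bitLinearWeight ε W - bitLinearWeight ε W')
        = frobNorm ((b - b') • S + b' • (S - S')) := by rw [hdec]
      _ ≤ frobNorm ((b - b') • S) + frobNorm (b' • (S - S')) := frobNorm_add_le _ _
      _ = |b - b'| * frobNorm S + |b'| * frobNorm (S - S') := by
          rw [frobNorm_smul, frobNorm_smul]
      _ ≤ frobNorm (W - W') + R * ((1 / ε) * frobNorm (W - W')) := add_le_add ht1 ht2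
      _ = (1 + R / ε) * frobNorm (W - W') := by ring
  -- assemble
  rw [← Matrix.sub_mulVec]
  calc eucNorm ((bitLinearWeight ε W - bitLinearWeight ε W').mulVec x)
      ≤ frobNorm (bitLinearWeight ε W - bitLinearWeight ε W') * eucNorm x :=
        eucNorm_mulVec_le _ _
    _ ≤ ((1 + R / ε) * frobNorm (W - W')) * Q := by
        apply mul_le_mul hfrob hx (Real.sqrt_nonneg _)
        positivity
    _ = Q * (1 + R / ε) * frobNorm (W - W') := by ring
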